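/- Let ρ be an n×n density matrix with eigenvalues 0 ≤ λ₁ ≤ λ₂ ≤ ⋯ ≤ λ_n, let A, B be n×n self-adjoint complex matrices, and let q ∈ ℝ with |q| > 1. Then (|q|λ_n + λ₁)²·|Tr[ρ[B₀,A₀]_{|q|}]|² ≤ (1+|q|)²·(|q|λ_n − λ₁)²·V_ρ(A)·V_ρ(B). -/

import Mathlib

/-!
Write `w` for the eigenvalues of `ρ` and `P`, `Q` for `A₀`, `B₀` in an eigenbasis of `ρ`. Then
`z := Tr[ρ A₀ B₀] = ∑ wᵢ Pᵢⱼ Qⱼᵢ`, `Tr[ρ B₀ A₀] = z̄`, and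
`|z̄ - |q| z|² = (|q| - 1)² |z|² + 4 |q| (Im z)²`.
Cauchy–Schwarz with weights `wᵢ` gives `|z|² ≤ V(A) V(B)`. For the imaginary part,
`z - z̄ = ∑ (wᵢ - wⱼ) Pᵢⱼ Qⱼᵢ`, and Cauchy–Schwarz with weights `|wᵢ - wⱼ|` together with
`(λ₁ + λₙ) |wᵢ - wⱼ| ≤ (λₙ - λ₁) (wᵢ + wⱼ)` gives `(λ₁ + λₙ)² (Im z)² ≤ (λₙ - λ₁)² V(A) V(B)`.
A polynomial inequality in `λ₁`, `λₙ`, `|q|` combines the two bounds.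
-/

open Matrix ComplexOrder

/-- `A₀ = A - Tr[ρA]·I`, the centered operator. -/
noncomputable def shift {n : ℕ} (ρ A : Matrix (Fin n) (Fin n) ℂ) : Matrix (Fin n) (Fin n) ℂ :=
  A - (ρ * A).trace • (1 : Matrix (Fin n) (Fin n) ℂ)

/-- `V_ρ(A) = Tr[ρA²] - (Tr[ρA])²` (a real number for self-adjoint `A` and density `ρ`). -/
noncomputable def variance {n : ℕ} (ρ A : Matrix (Fin n) (Fin n) ℂ) : ℝ :=
  ((ρ * (A * A)).trace - ((ρ * A).trace) ^ 2).re

/-- the q-commutator `[A,B]_q = AB - q·BA`. -/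
noncomputable def qComm {n : ℕ} (q : ℝ) (A B : Matrix (Fin n) (Fin n) ℂ) :
    Matrix (Fin n) (Fin n) ℂ :=
  A * B - (q : ℂ) • (B * A)

/-- the q-anti-commutator `{A,B}_q = AB + q·BA`. -/
noncomputable def qAnti {n : ℕ} (q : ℝ) (A B : Matrix (Fin n) (Fin n) ℂ) :
    Matrix (Fin n) (Fin n) ℂ :=
  A * B + (q : ℂ) • (B * A)

/-- `lam` lists the eigenvalues of `ρ` (with multiplicity) in increasing order. -/
def IsOrderedEigenvalues {n : ℕ} {ρ : Matrix (Fin n) (Fin n) ℂ}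
    (hρ : ρ.IsHermitian) (lam : Fin n → ℝ) : Prop :=
  Monotone lam ∧ ∃ σ : Equiv.Perm (Fin n), ∀ i, lam i = hρ.eigenvalues (σ i)

open Finset Unitary

lemma norm_sum_ofReal_mul_mul_sq_le {κ : Type*} [Fintype κ] (c : κ → ℝ) (f g : κ → ℂ) :
    ‖∑ k, (c k : ℂ) * (f k * g k)‖ ^ 2 ≤ (∑ k, |c k| * ‖f k‖ ^ 2) * ∑ k, |c k| * ‖g k‖ ^ 2 := by
  have hnorm : ‖∑ k, (c k : ℂ) * (f k * g k)‖ ≤ ∑ k, |c k| * (‖f k‖ * ‖g k‖) :=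
    (norm_sum_le _ _).trans_eq <| sum_congr rfl fun k _ => by
      rw [norm_mul, norm_mul, Complex.norm_real, Real.norm_eq_abs]
  refine (pow_le_pow_left₀ (norm_nonneg _) hnorm 2).trans ?_
  exact sum_sq_le_sum_mul_sum_of_sq_le_mul _ (fun k _ => by positivity)
    (fun k _ => by positivity) fun k _ => le_of_eq (by ring)

lemma Matrix.IsHermitian.norm_apply_comm {ι : Type*} {P : Matrix ι ι ℂ} (hP : P.IsHermitian)
    (i j : ι) : ‖P j i‖ = ‖P i j‖ := by
  rw [← hP.apply i j, norm_star]

lemma add_mul_abs_sub_le_sub_mul_add {a b x y : ℝ} (ha : 0 ≤ a) (hx : x ∈ Set.Icc a b)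
    (hy : y ∈ Set.Icc a b) : (a + b) * |x - y| ≤ (b - a) * (x + y) := by
  obtain ⟨hax, hxb⟩ := hx
  obtain ⟨hay, hyb⟩ := hy
  have hb : 0 ≤ b := ha.trans (hax.trans hxb)
  rcases abs_cases (x - y) with ⟨h, _⟩ | ⟨h, _⟩ <;> rw [h] <;>
    nlinarith [mul_le_mul_of_nonneg_left hxb ha, mul_le_mul_of_nonneg_left hyb ha,
      mul_le_mul_of_nonneg_left hax hb, mul_le_mul_of_nonneg_left hay hb]

lemma norm_star_sub_ofReal_mul_sq (z : ℂ) (q : ℝ) :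
    ‖star z - (q : ℂ) * z‖ ^ 2 = (q - 1) ^ 2 * ‖z‖ ^ 2 + 4 * q * z.im ^ 2 := by
  simp only [Complex.sq_norm, Complex.normSq_apply, Complex.star_def, Complex.sub_re,
    Complex.sub_im, Complex.conj_re, Complex.conj_im, Complex.re_ofReal_mul,
    Complex.im_ofReal_mul]
  ring

lemma sq_add_mul_sq_sub_add_le {a b q : ℝ} (ha : 0 ≤ a) (hab : a ≤ b) (hq : 1 < q) :
    (q * b + a) ^ 2 * ((q - 1) ^ 2 * (a + b) ^ 2 + 4 * q * (b - a) ^ 2)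
      ≤ (1 + q) ^ 2 * (q * b - a) ^ 2 * (a + b) ^ 2 := by
  have hb : 0 ≤ b := ha.trans hab
  have hq0 : 0 ≤ q := by linarith
  have hq1 : 0 ≤ q - 1 := by linarith
  have hba : 0 ≤ b - a := by linarith
  -- the right side minus the left side, factored
  have hdiff : 0 ≤ 4 * q * (b - a) *
      (a * b ^ 2 * ((3 * q + 1) * (q - 1)) + a ^ 2 * b * ((q + 3) * (q - 1))) := by
    positivity
  linarith [hdiff]

lemma sq_mul_norm_star_sub_ofReal_mul_sq_le (z : ℂ) {V a b q : ℝ} (hz : ‖z‖ ^ 2 ≤ V)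
    (him : (a + b) ^ 2 * z.im ^ 2 ≤ (b - a) ^ 2 * V) (ha : 0 ≤ a) (hab : a ≤ b) (hq : 1 < q) :
    (q * b + a) ^ 2 * ‖star z - (q : ℂ) * z‖ ^ 2 ≤ (1 + q) ^ 2 * (q * b - a) ^ 2 * V := by
  rw [norm_star_sub_ofReal_mul_sq]
  rcases (add_nonneg ha (ha.trans hab)).eq_or_lt with hab0 | hab0
  · obtain rfl : a = 0 := by linarith
    obtain rfl : b = 0 := by linarith
    simp
  · refine le_of_mul_le_mul_right ?_ (pow_pos hab0 2)
    have hV : 0 ≤ V := (sq_nonneg _).trans hz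
    nlinarith [mul_le_mul_of_nonneg_right (sq_add_mul_sq_sub_add_le ha hab hq) hV,
      mul_le_mul_of_nonneg_left hz
        (by positivity : 0 ≤ (q * b + a) ^ 2 * (q - 1) ^ 2 * (a + b) ^ 2),
      mul_le_mul_of_nonneg_left him (by positivity : 0 ≤ (q * b + a) ^ 2 * (4 * q))]

section Weighted

variable {ι : Type*} [Fintype ι]

noncomputable def weightedPairing (w : ι → ℝ) (P Q : Matrix ι ι ℂ) : ℂ :=
  ∑ i, ∑ j, (w i : ℂ) * (P i j * Q j i)

noncomputable def weightedNormSq (w : ι → ℝ) (P : Matrix ι ι ℂ) : ℝ :=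
  ∑ i, ∑ j, w i * ‖P i j‖ ^ 2

variable {w : ι → ℝ} {P Q : Matrix ι ι ℂ}

lemma weightedNormSq_nonneg (hw : ∀ i, 0 ≤ w i) (P : Matrix ι ι ℂ) : 0 ≤ weightedNormSq w P :=
  sum_nonneg fun i _ => sum_nonneg fun j _ => mul_nonneg (hw i) (by positivity)

lemma star_weightedPairing (hP : P.IsHermitian) (hQ : Q.IsHermitian) :
    star (weightedPairing w P Q) = weightedPairing w Q P := by
  simp only [weightedPairing, star_sum, star_mul', hP.apply, hQ.apply, mul_comm (P _ _),
    Complex.star_def, Complex.conj_ofReal]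

lemma weightedPairing_self (hP : P.IsHermitian) :
    weightedPairing w P P = weightedNormSq w P := by
  simp only [weightedPairing, weightedNormSq]
  push_cast
  refine sum_congr rfl fun i _ => sum_congr rfl fun j _ => ?_
  rw [← hP.apply j i, Complex.star_def, Complex.mul_conj']

lemma weightedPairing_sub_star (hP : P.IsHermitian) (hQ : Q.IsHermitian) :
    weightedPairing w P Q - star (weightedPairing w P Q) =
      ∑ i, ∑ j, ((w i - w j : ℝ) : ℂ) * (P i j * Q j i) := by
  rw [star_weightedPairing hP hQ, weightedPairing, weightedPairing,
    sum_comm (s := univ) (t := univ) (f := fun i j => (w i : ℂ) * (Q i j * P j i)),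
    ← sum_sub_distrib]
  refine sum_congr rfl fun i _ => ?_
  rw [← sum_sub_distrib]
  refine sum_congr rfl fun j _ => ?_
  push_cast
  ring

lemma sum_sum_mul_norm_apply_comm_sq (hQ : Q.IsHermitian) (c : ι → ι → ℝ) :
    ∑ i, ∑ j, c i j * ‖Q j i‖ ^ 2 = ∑ i, ∑ j, c i j * ‖Q i j‖ ^ 2 := by
  simp only [hQ.norm_apply_comm]

lemma norm_weightedPairing_sq_le (hw : ∀ i, 0 ≤ w i) (hQ : Q.IsHermitian) :
    ‖weightedPairing w P Q‖ ^ 2 ≤ weightedNormSq w P * weightedNormSq w Q := by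
  have h := norm_sum_ofReal_mul_mul_sq_le (fun k : ι × ι => w k.1)
    (fun k => P k.1 k.2) (fun k => Q k.2 k.1)
  simp only [Fintype.sum_prod_type, abs_of_nonneg (hw _)] at h
  rwa [sum_sum_mul_norm_apply_comm_sq hQ] at h

lemma add_mul_sum_sum_abs_sub_le {a b : ℝ} (ha : 0 ≤ a) (hw : ∀ i, w i ∈ Set.Icc a b)
    (hP : P.IsHermitian) :
    (a + b) * ∑ i, ∑ j, |w i - w j| * ‖P i j‖ ^ 2 ≤ 2 * (b - a) * weightedNormSq w P := by
  have hswap : ∑ i, ∑ j, w j * ‖P i j‖ ^ 2 = weightedNormSq w P := by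
    rw [sum_comm, sum_sum_mul_norm_apply_comm_sq hP, weightedNormSq]
  calc (a + b) * ∑ i, ∑ j, |w i - w j| * ‖P i j‖ ^ 2
      ≤ ∑ i, ∑ j, (b - a) * (w i + w j) * ‖P i j‖ ^ 2 := by
        rw [mul_sum]
        refine sum_le_sum fun i _ => ?_
        rw [mul_sum]
        refine sum_le_sum fun j _ => ?_
        rw [← mul_assoc]
        exact mul_le_mul_of_nonneg_right (add_mul_abs_sub_le_sub_mul_add ha (hw i) (hw j))
          (by positivity)
    _ = (b - a) * (weightedNormSq w P + ∑ i, ∑ j, w j * ‖P i j‖ ^ 2) := by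
        simp only [weightedNormSq, mul_sum, ← sum_add_distrib]
        exact sum_congr rfl fun i _ => sum_congr rfl fun j _ => by ring
    _ = 2 * (b - a) * weightedNormSq w P := by
        rw [hswap]
        ring

lemma sq_add_mul_im_weightedPairing_sq_le {a b : ℝ} (ha : 0 ≤ a) (hab : a ≤ b)
    (hw : ∀ i, w i ∈ Set.Icc a b) (hP : P.IsHermitian) (hQ : Q.IsHermitian) :
    (a + b) ^ 2 * (weightedPairing w P Q).im ^ 2 ≤
      (b - a) ^ 2 * (weightedNormSq w P * weightedNormSq w Q) := by
  set z := weightedPairing w P Q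
  set S : Matrix ι ι ℂ → ℝ := fun R => ∑ i, ∑ j, |w i - w j| * ‖R i j‖ ^ 2
  have hcs : ‖z - star z‖ ^ 2 ≤ S P * S Q := by
    have h := norm_sum_ofReal_mul_mul_sq_le (fun k : ι × ι => w k.1 - w k.2)
      (fun k => P k.1 k.2) (fun k => Q k.2 k.1)
    simp only [Fintype.sum_prod_type] at h
    rwa [sum_sum_mul_norm_apply_comm_sq hQ, ← weightedPairing_sub_star hP hQ] at h
  have hz : ‖z - star z‖ ^ 2 = 4 * z.im ^ 2 := by
    rw [Complex.star_def, Complex.sub_conj, norm_mul, Complex.norm_I, Complex.norm_real,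
      Real.norm_eq_abs, mul_one, sq_abs]
    ring
  have hb : 0 ≤ b := ha.trans hab
  have hba : 0 ≤ b - a := sub_nonneg.mpr hab
  have hVP := weightedNormSq_nonneg (fun i => ha.trans (hw i).1) P
  calc (a + b) ^ 2 * z.im ^ 2 = (a + b) ^ 2 * ‖z - star z‖ ^ 2 / 4 := by rw [hz]; ring
    _ ≤ ((a + b) * S P) * ((a + b) * S Q) / 4 := by
        rw [mul_mul_mul_comm, ← sq]
        gcongr
    _ ≤ (2 * (b - a) * weightedNormSq w P) * (2 * (b - a) * weightedNormSq w Q) / 4 := by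
        gcongr ?_ / _
        exact mul_le_mul (add_mul_sum_sum_abs_sub_le ha hw hP)
          (add_mul_sum_sum_abs_sub_le ha hw hQ) (by positivity) (by positivity)
    _ = (b - a) ^ 2 * (weightedNormSq w P * weightedNormSq w Q) := by ring

theorem sq_mul_norm_star_weightedPairing_sub_le {a b q : ℝ} (ha : 0 ≤ a) (hab : a ≤ b)
    (hq : 1 < q) (hw : ∀ i, w i ∈ Set.Icc a b) (hP : P.IsHermitian) (hQ : Q.IsHermitian) :
    (q * b + a) ^ 2 * ‖star (weightedPairing w P Q) - q * weightedPairing w P Q‖ ^ 2 ≤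
      (1 + q) ^ 2 * (q * b - a) ^ 2 * (weightedNormSq w P * weightedNormSq w Q) :=
  sq_mul_norm_star_sub_ofReal_mul_sq_le _
    (norm_weightedPairing_sq_le (fun i => ha.trans (hw i).1) hQ)
    (sq_add_mul_im_weightedPairing_sq_le ha hab hw hP hQ) ha hab hq

end Weighted

section Eigenbasis

variable {ι : Type*} [Fintype ι] {ρ : Matrix ι ι ℂ}

lemma star_trace_mul_of_isHermitian {A : Matrix ι ι ℂ} (hρ : ρ.IsHermitian)
    (hA : A.IsHermitian) : star (ρ * A).trace = (ρ * A).trace := by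
  rw [← trace_conjTranspose, conjTranspose_mul, hρ.eq, hA.eq, trace_mul_comm]

variable [DecidableEq ι]

lemma trace_conjStarAlgAut (u : unitaryGroup ι ℂ) (X : Matrix ι ι ℂ) :
    (conjStarAlgAut ℂ _ u X).trace = X.trace := by
  rw [conjStarAlgAut_apply, trace_mul_cycle, coe_star_mul_self, one_mul]

noncomputable def eigenbasisConj (hρ : ρ.IsHermitian) : Matrix ι ι ℂ ≃⋆ₐ[ℂ] Matrix ι ι ℂ :=
  conjStarAlgAut ℂ _ (star hρ.eigenvectorUnitary)

lemma isHermitian_eigenbasisConj (hρ : ρ.IsHermitian) {A : Matrix ι ι ℂ}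
    (hA : A.IsHermitian) : (eigenbasisConj hρ A).IsHermitian :=
  (hA.isSelfAdjoint.map _).isHermitian

lemma trace_mul_mul_eq_weightedPairing (hρ : ρ.IsHermitian) (M N : Matrix ι ι ℂ) :
    (ρ * (M * N)).trace =
      weightedPairing hρ.eigenvalues (eigenbasisConj hρ M) (eigenbasisConj hρ N) := by
  rw [← trace_conjStarAlgAut (star hρ.eigenvectorUnitary), map_mul, map_mul,
    hρ.conjStarAlgAut_star_eigenvectorUnitary]
  simp only [trace, diag_apply, diagonal_mul, Function.comp_apply]
  simp only [mul_apply, mul_sum, weightedPairing, eigenbasisConj, RCLike.ofReal_eq_complex_ofReal]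

end Eigenbasis

section Centered

variable {m : ℕ} {ρ A B : Matrix (Fin m) (Fin m) ℂ}

lemma isHermitian_shift (hρ : ρ.IsHermitian) (hA : A.IsHermitian) :
    (shift ρ A).IsHermitian := by
  rw [shift, IsHermitian, conjTranspose_sub, conjTranspose_smul, conjTranspose_one, hA.eq,
    star_trace_mul_of_isHermitian hρ hA]

lemma variance_eq_re_trace_mul_shift_mul_shift (htr : ρ.trace = 1) :
    variance ρ A = (ρ * (shift ρ A * shift ρ A)).trace.re := by
  rw [variance]
  congr 1
  simp only [shift, Matrix.sub_mul, Matrix.mul_sub, Matrix.smul_mul, Matrix.mul_smul,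
    Matrix.one_mul, Matrix.mul_one, trace_sub, trace_smul, htr, smul_eq_mul]
  ring

lemma trace_mul_qComm (q : ℝ) :
    (ρ * qComm q A B).trace = (ρ * (A * B)).trace - q * (ρ * (B * A)).trace := by
  rw [qComm, Matrix.mul_sub, Matrix.mul_smul, trace_sub, trace_smul, smul_eq_mul]

lemma variance_eq_weightedNormSq (hρ : ρ.IsHermitian) (htr : ρ.trace = 1)
    (hA : A.IsHermitian) :
    variance ρ A = weightedNormSq hρ.eigenvalues (eigenbasisConj hρ (shift ρ A)) := by
  rw [variance_eq_re_trace_mul_shift_mul_shift htr, trace_mul_mul_eq_weightedPairing hρ,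
    weightedPairing_self (isHermitian_eigenbasisConj hρ (isHermitian_shift hρ hA)),
    Complex.ofReal_re]

lemma trace_mul_qComm_shift (hρ : ρ.IsHermitian) (hA : A.IsHermitian) (hB : B.IsHermitian)
    (q : ℝ) :
    (ρ * qComm q (shift ρ B) (shift ρ A)).trace =
      star (weightedPairing hρ.eigenvalues (eigenbasisConj hρ (shift ρ A))
        (eigenbasisConj hρ (shift ρ B))) -
      q * weightedPairing hρ.eigenvalues (eigenbasisConj hρ (shift ρ A))
        (eigenbasisConj hρ (shift ρ B)) := by
  rw [trace_mul_qComm, trace_mul_mul_eq_weightedPairing hρ, trace_mul_mul_eq_weightedPairing hρ,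
    star_weightedPairing (isHermitian_eigenbasisConj hρ (isHermitian_shift hρ hA))
      (isHermitian_eigenbasisConj hρ (isHermitian_shift hρ hB))]

end Centered

lemma IsOrderedEigenvalues.eigenvalues_mem_Icc {n : ℕ}
    {ρ : Matrix (Fin (n + 1)) (Fin (n + 1)) ℂ} {hρ : ρ.IsHermitian} {lam : Fin (n + 1) → ℝ}
    (h : IsOrderedEigenvalues hρ lam)
    (i : Fin (n + 1)) : hρ.eigenvalues i ∈ Set.Icc (lam 0) (lam (Fin.last n)) := by
  obtain ⟨hmono, σ, hσ⟩ := h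
  rw [← σ.apply_symm_apply i, ← hσ]
  exact ⟨hmono (Fin.zero_le _), hmono (Fin.le_last _)⟩

theorem refined_qcommutator_uncertainty_of_one_lt_abs_general {n : ℕ}
    (ρ A B : Matrix (Fin (n + 1)) (Fin (n + 1)) ℂ)
    (hρ : ρ.PosSemidef) (htr : ρ.trace = 1)
    (hA : A.IsHermitian) (hB : B.IsHermitian)
    (lam : Fin (n + 1) → ℝ) (hlam : IsOrderedEigenvalues hρ.1 lam)
    (q : ℝ) (hq : 1 < |q|) :
    (|q| * lam (Fin.last n) + lam 0) ^ 2 *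
        ‖(ρ * qComm |q| (shift ρ B) (shift ρ A)).trace‖ ^ 2 ≤
      (1 + |q|) ^ 2 * (|q| * lam (Fin.last n) - lam 0) ^ 2 *
        variance ρ A * variance ρ B := by
  have hlam0 : 0 ≤ lam 0 := by
    obtain ⟨-, σ, hσ⟩ := hlam
    exact hσ 0 ▸ hρ.eigenvalues_nonneg (σ 0)
  rw [trace_mul_qComm_shift hρ.1 hA hB, variance_eq_weightedNormSq hρ.1 htr hA,
    variance_eq_weightedNormSq hρ.1 htr hB, mul_assoc]
  exact sq_mul_norm_star_weightedPairing_sub_le hlam0 (hlam.1 (Fin.zero_le _)) hq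
    hlam.eigenvalues_mem_Icc (isHermitian_eigenbasisConj hρ.1 (isHermitian_shift hρ.1 hA))
    (isHermitian_eigenbasisConj hρ.1 (isHermitian_shift hρ.1 hB))

/-- Refined q-commutator uncertainty relation, case `|q| > 1`:
`(|q|λₙ + λ₁)²·|Tr[ρ[B₀,A₀]_{|q|}]|² ≤ (1+|q|)²·(|q|λₙ − λ₁)²·V_ρ(A)·V_ρ(B)`. -/
theorem refined_qcommutator_uncertainty_of_one_lt_abs {n : ℕ}
    (ρ A B : Matrix (Fin (n + 1)) (Fin (n + 1)) ℂ)
    (hρ : ρ.PosSemidef) (htr : ρ.trace = 1)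
    (hA : A.IsHermitian) (hB : B.IsHermitian)
    (lam : Fin (n + 1) → ℝ) (hlam : IsOrderedEigenvalues hρ.1 lam)
    (hlam0 : 0 ≤ lam 0) (q : ℝ) (hq : 1 < |q|) :
    (|q| * lam (Fin.last n) + lam 0) ^ 2 *
        ‖(ρ * qComm |q| (shift ρ B) (shift ρ A)).trace‖ ^ 2 ≤
      (1 + |q|) ^ 2 * (|q| * lam (Fin.last n) - lam 0) ^ 2 *
        variance ρ A * variance ρ B :=
  refined_qcommutator_uncertainty_of_one_lt_abs_general ρ A B hρ htr hA hB lam hlam q hq
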